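/- For any integers g and N and any integers a_0, …, a_N with a_0 = 1, there exist unique rational numbers n_{g-N}, …, n_g with n_g = 1 such that the coefficient of q^{1-g+i} in ∑_{j=0}^{N} n_{g-j} q^{1-(g-j)}(1-q)^{2(g-j)-2} equals a_i for all 0 ≤ i ≤ N. -/

import Mathlib

open Finset

/-- The formal variable `q` in the field of Laurent series `ℚ((q))`. -/
noncomputable def q : LaurentSeries ℚ := HahnSeries.single (1 : ℤ) 1

lemma coeff_ofPS_neg (f : PowerSeries ℚ) (k : ℤ) (hk : k < 0) :
    (HahnSeries.ofPowerSeries ℤ ℚ f).coeff k = 0 := by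
  rw [HahnSeries.ofPowerSeries_apply, HahnSeries.embDomain_notin_range]
  rintro ⟨m, hm⟩
  simp only [Nat.castOrderEmbedding_apply] at hm
  omega

lemma one_sub_q_eq : (1 : LaurentSeries ℚ) - q =
    HahnSeries.ofPowerSeries ℤ ℚ (1 - PowerSeries.X) := by
  rw [map_sub, map_one, HahnSeries.ofPowerSeries_X, q]

lemma exists_ps (m : ℤ) : ∃ f : PowerSeries ℚ, PowerSeries.constantCoeff f = 1 ∧
    ((1 : LaurentSeries ℚ) - q) ^ m = HahnSeries.ofPowerSeries ℤ ℚ f := by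
  have hc : ∀ n : ℕ, PowerSeries.constantCoeff ((1 - PowerSeries.X : PowerSeries ℚ) ^ n) = 1 := by
    intro n
    rw [map_pow, map_sub, map_one, PowerSeries.constantCoeff_X, sub_zero, one_pow]
  cases m with
  | ofNat n =>
    exact ⟨(1 - PowerSeries.X) ^ n, hc n, by
      rw [Int.ofNat_eq_coe, zpow_natCast, one_sub_q_eq, map_pow]⟩
  | negSucc n =>
    refine ⟨((1 - PowerSeries.X) ^ (n + 1))⁻¹, ?_, ?_⟩
    · rw [PowerSeries.constantCoeff_inv, hc, inv_one]
    · have h1 : ((1 - PowerSeries.X : PowerSeries ℚ) ^ (n + 1)) *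
          ((1 - PowerSeries.X) ^ (n + 1))⁻¹ = 1 :=
        PowerSeries.mul_inv_cancel _ (by rw [hc]; exact one_ne_zero)
      have h2 := congrArg (HahnSeries.ofPowerSeries ℤ ℚ) h1
      rw [map_mul, map_one] at h2
      rw [zpow_negSucc, one_sub_q_eq, ← map_pow, inv_eq_of_mul_eq_one_right h2]

lemma coeff_one_sub_q_zpow_zero (m : ℤ) :
    (((1 : LaurentSeries ℚ) - q) ^ m).coeff 0 = 1 := by
  obtain ⟨f, hf, h⟩ := exists_ps m
  rw [h]
  have : ((0 : ℕ) : ℤ) = (0 : ℤ) := rfl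
  rw [← this, HahnSeries.ofPowerSeries_apply_coeff, PowerSeries.coeff_zero_eq_constantCoeff, hf]

lemma coeff_one_sub_q_zpow_neg (m : ℤ) (k : ℤ) (hk : k < 0) :
    (((1 : LaurentSeries ℚ) - q) ^ m).coeff k = 0 := by
  obtain ⟨f, _, h⟩ := exists_ps m
  rw [h]
  exact coeff_ofPS_neg f k hk

lemma q_zpow (z : ℤ) : q ^ z = HahnSeries.single z 1 := by
  have hnat : ∀ n : ℕ, q ^ (n : ℕ) = HahnSeries.single (n : ℤ) 1 := by
    intro n
    rw [q, HahnSeries.single_pow, one_pow, nsmul_eq_mul, mul_one]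
  cases z with
  | ofNat n => rw [Int.ofNat_eq_coe, zpow_natCast, hnat]
  | negSucc n =>
    rw [zpow_negSucc, hnat]
    have : (HahnSeries.single ((n + 1 : ℕ) : ℤ) (1 : ℚ)) *
        HahnSeries.single (Int.negSucc n) 1 = 1 := by
      rw [HahnSeries.single_mul_single, mul_one, ← HahnSeries.single_zero_one]
      congr 1
      rw [Int.negSucc_eq]
      push_cast
      ring_nf
    rw [inv_eq_of_mul_eq_one_right this]

/-- The recursively defined coefficients. -/
noncomputable def nrec (c : ℕ → ℕ → ℚ) (a : ℕ → ℤ) (i : ℕ) : ℚ :=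
  (a i : ℚ) - ∑ j ∈ (Finset.range i).attach, nrec c a j.1 * c i j.1
termination_by i
decreasing_by exact Finset.mem_range.mp j.2

lemma nrec_eq (c : ℕ → ℕ → ℚ) (a : ℕ → ℤ) (i : ℕ) :
    nrec c a i = (a i : ℚ) - ∑ j ∈ Finset.range i, nrec c a j * c i j := by
  rw [nrec, ← Finset.sum_attach (Finset.range i) (fun j => nrec c a j * c i j)]

/-- Prescribing the first `N+1` coefficients `a 0 = 1, a 1, …, a N` (at `q^{1-g}, …, q^{1-g+N}`)
uniquely determines an expansion in the basis `q^{1-r}(1-q)^{2r-2}`, `r = g-N, …, g`,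
with `n_g = 1`.  Here `n j` stands for `n_{g-j}`. -/
theorem unique_BPS_expansion (g : ℤ) (N : ℕ) (a : ℕ → ℤ) (ha : a 0 = 1) :
    ∃! n : ℕ → ℚ, n 0 = 1 ∧ (∀ j : ℕ, N < j → n j = 0) ∧
      ∀ i : ℕ, i ≤ N →
        (∑ j ∈ Finset.range (N + 1),
            n j • (q ^ (1 - (g - j : ℤ)) * (1 - q) ^ (2 * (g - j : ℤ) - 2))).coeff
          (1 - g + i) = (a i : ℚ) := by
  set c : ℕ → ℕ → ℚ := fun i j =>
    (((1 : LaurentSeries ℚ) - q) ^ (2 * (g - (j : ℤ)) - 2)).coeff ((i : ℤ) - (j : ℤ)) with hc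
  have hcdiag : ∀ i : ℕ, c i i = 1 := by
    intro i; simp only [hc, sub_self]; exact coeff_one_sub_q_zpow_zero _
  have hczero : ∀ i j : ℕ, i < j → c i j = 0 := by
    intro i j hij
    exact coeff_one_sub_q_zpow_neg _ _ (by omega)
  -- coefficient of the sum
  have key : ∀ (nn : ℕ → ℚ) (i : ℕ), i ≤ N →
      (∑ j ∈ Finset.range (N + 1),
          nn j • (q ^ (1 - (g - j : ℤ)) * (1 - q) ^ (2 * (g - j : ℤ) - 2))).coeff (1 - g + i)
        = (∑ j ∈ Finset.range i, nn j * c i j) + nn i := by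
    intro nn i hi
    have hcoeff : ∀ j : ℕ,
        (nn j • (q ^ (1 - (g - j : ℤ)) * (1 - q) ^ (2 * (g - j : ℤ) - 2))).coeff (1 - g + i)
          = nn j * c i j := by
      intro j
      rw [HahnSeries.coeff_smul, q_zpow, smul_eq_mul]
      congr 1
      have harg : (1 - g + i : ℤ) = ((i : ℤ) - j) + (1 - (g - j)) := by ring
      rw [harg, HahnSeries.coeff_single_mul_add, one_mul]
    have hsum : (∑ j ∈ Finset.range (N + 1),
          nn j • (q ^ (1 - (g - j : ℤ)) * (1 - q) ^ (2 * (g - j : ℤ) - 2))).coeff (1 - g + i)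
        = ∑ j ∈ Finset.range (N + 1), nn j * c i j :=
      (map_sum (HahnSeries.coeff.addMonoidHom (1 - g + i)) _ _).trans
        (Finset.sum_congr rfl fun j _ => hcoeff j)
    have hsub : Finset.range (i + 1) ⊆ Finset.range (N + 1) := by
      intro x hx; simp only [Finset.mem_range] at *; omega
    have h1 : ∑ j ∈ Finset.range (N + 1), nn j * c i j
        = ∑ j ∈ Finset.range (i + 1), nn j * c i j := by
      symm
      apply Finset.sum_subset hsub
      intro x hx hx2
      have hlt : i < x := by
        simp only [Finset.mem_range] at hx hx2
        omega
      rw [hczero i x hlt, mul_zero]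
    rw [hsum, h1, Finset.sum_range_succ, hcdiag, mul_one]
  refine ⟨fun j => if j ≤ N then nrec c a j else 0, ⟨?_, ?_, ?_⟩, ?_⟩
  · show (if 0 ≤ N then nrec c a 0 else 0) = 1
    rw [if_pos (Nat.zero_le N), nrec_eq]
    simp [ha]
  · intro j hj
    show (if j ≤ N then nrec c a j else 0) = 0
    rw [if_neg (Nat.not_le.mpr hj)]
  · intro i hi
    rw [key _ i hi]
    show (∑ j ∈ Finset.range i, (if j ≤ N then nrec c a j else 0) * c i j)
        + (if i ≤ N then nrec c a i else 0) = (a i : ℚ)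
    rw [if_pos hi, nrec_eq]
    have : ∀ j ∈ Finset.range i, (if j ≤ N then nrec c a j else 0) * c i j
        = nrec c a j * c i j := by
      intro j hj
      rw [if_pos (by simp only [Finset.mem_range] at hj; omega)]
    rw [Finset.sum_congr rfl this]
    ring_nf
  · intro y ⟨hy0, hyz, hyeq⟩
    funext i
    induction i using Nat.strong_induction_on with
    | _ i ih =>
      show y i = if i ≤ N then nrec c a i else 0
      by_cases hi : i ≤ N
      · rw [if_pos hi]
        have := hyeq i hi
        rw [key y i hi] at this
        have hyi : y i = (a i : ℚ) - ∑ j ∈ Finset.range i, y j * c i j := by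
          linarith [this]
        rw [hyi, nrec_eq]
        congr 1
        refine Finset.sum_congr rfl fun j hj => ?_
        have hji : j < i := Finset.mem_range.mp hj
        rw [ih j hji]
        show (if j ≤ N then nrec c a j else 0) * c i j = nrec c a j * c i j
        rw [if_pos (by omega : j ≤ N)]
      · rw [if_neg hi]
        exact hyz i (by omega)
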